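/- Let I be a finite index set, (ω_ℓ)_{ℓ∈I} nonnegative reals, ε > 0, B ≥ 1, r > 0, and c_ℓ > 0. Suppose ω_ℓ = θ*_ℓ² / (2 ε² a) for a minimizer (θ*_ℓ) of ∑ θ_ℓ⁴ over Θ(r) = {θ : ∑ θ_ℓ² c_ℓ² ≤ 1, ∑ θ_ℓ² ≥ r²}, where a² = (1/(2ε⁴)) ∑ (θ*_ℓ)⁴. If the minimizer has the form (θ*_ℓ)² = a₀² (1 − (c_ℓ/T)²)₊ for constants a₀, T > 0, then for any θ ∈ Θ(B r), (1/ε²) ∑_{ℓ∈I} ω_ℓ θ_ℓ² ≥ B² a. -/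
import Mathlib


set_option maxHeartbeats 1000000 in
theorem stmt_12 (I : Type) [Fintype I] (c : I → ℝ) (hc : ∀ ℓ, 0 < c ℓ)
    (ε B r : ℝ) (hε : 0 < ε) (hB : 1 ≤ B) (hr : 0 < r)
    (θstar : I → ℝ)
    (hmem : θstar ∈ {θ : I → ℝ | (∑ ℓ, (θ ℓ) ^ 2 * (c ℓ) ^ 2 ≤ 1) ∧ r ^ 2 ≤ ∑ ℓ, (θ ℓ) ^ 2})
    (hmin : ∀ θ ∈ {θ : I → ℝ | (∑ ℓ, (θ ℓ) ^ 2 * (c ℓ) ^ 2 ≤ 1) ∧ r ^ 2 ≤ ∑ ℓ, (θ ℓ) ^ 2},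
      ∑ ℓ, (θstar ℓ) ^ 4 ≤ ∑ ℓ, (θ ℓ) ^ 4)
    (a : ℝ) (ha : a = Real.sqrt ((1 / (2 * ε ^ 4)) * ∑ ℓ, (θstar ℓ) ^ 4))
    (a₀ T : ℝ) (ha₀ : 0 < a₀) (hT : 0 < T)
    (hform : ∀ ℓ, (θstar ℓ) ^ 2 = a₀ ^ 2 * max (1 - (c ℓ / T) ^ 2) 0)
    (ω : I → ℝ) (hω : ∀ ℓ, ω ℓ = (θstar ℓ) ^ 2 / (2 * ε ^ 2 * a)) :
    ∀ θ ∈ {θ : I → ℝ | (∑ ℓ, (θ ℓ) ^ 2 * (c ℓ) ^ 2 ≤ 1) ∧ (B * r) ^ 2 ≤ ∑ ℓ, (θ ℓ) ^ 2},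
      B ^ 2 * a ≤ (1 / ε ^ 2) * ∑ ℓ, ω ℓ * (θ ℓ) ^ 2 := by
  obtain ⟨hsc, hsr⟩ := hmem
  intro θ hθ
  obtain ⟨hθc, hθr⟩ := hθ
  have hBpos : (0:ℝ) < B := lt_of_lt_of_le one_pos hB
  -- positivity of the fourth-moment sum and of a
  have hS4nn : ∀ ℓ : I, 0 ≤ θstar ℓ ^ 4 := fun ℓ => by positivity
  have hS4pos : 0 < ∑ ℓ, θstar ℓ ^ 4 := by
    by_contra h
    push_neg at h
    have hz : ∑ ℓ, θstar ℓ ^ 4 = 0 :=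
      le_antisymm h (Finset.sum_nonneg fun ℓ _ => hS4nn ℓ)
    have hall := (Finset.sum_eq_zero_iff_of_nonneg (fun ℓ _ => hS4nn ℓ)).mp hz
    have h2 : ∑ ℓ, θstar ℓ ^ 2 = 0 := by
      apply Finset.sum_eq_zero
      intro ℓ _
      have h4 : θstar ℓ ^ 4 = 0 := hall ℓ (Finset.mem_univ ℓ)
      have : θstar ℓ = 0 := by
        have := pow_eq_zero_iff (n := 4) (by norm_num) |>.mp h4
        exact this
      simp [this]
    rw [h2] at hsr
    nlinarith
  have hapos : 0 < a := by
    rw [ha]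
    exact Real.sqrt_pos.mpr (by positivity)
  have ha2 : a ^ 2 = (1 / (2 * ε ^ 4)) * ∑ ℓ, θstar ℓ ^ 4 := by
    rw [ha]
    exact Real.sq_sqrt (by positivity)
  -- the rescaled point x = θ²/B²
  set x : I → ℝ := fun ℓ => θ ℓ ^ 2 / B ^ 2 with hx
  set d : I → ℝ := fun ℓ => x ℓ - θstar ℓ ^ 2 with hd
  set S : ℝ := ∑ ℓ, θstar ℓ ^ 2 * d ℓ with hS
  set D : ℝ := ∑ ℓ, d ℓ ^ 2 with hD
  have hDnn : 0 ≤ D := Finset.sum_nonneg fun ℓ _ => sq_nonneg _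
  have hxc : ∑ ℓ, x ℓ * c ℓ ^ 2 ≤ 1 := by
    have e : ∑ ℓ, x ℓ * c ℓ ^ 2 = (∑ ℓ, θ ℓ ^ 2 * c ℓ ^ 2) / B ^ 2 := by
      rw [Finset.sum_div]
      refine Finset.sum_congr rfl fun ℓ _ => ?_
      have hxl : x ℓ = θ ℓ ^ 2 / B ^ 2 := rfl
      rw [hxl]; ring
    rw [e, div_le_one (by positivity)]
    nlinarith
  have hxr : r ^ 2 ≤ ∑ ℓ, x ℓ := by
    have e : ∑ ℓ, x ℓ = (∑ ℓ, θ ℓ ^ 2) / B ^ 2 := by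
      rw [Finset.sum_div]
    rw [e, le_div_iff₀ (by positivity)]
    nlinarith
  -- first-order condition via line segments
  have key : ∀ t : ℝ, 0 < t → t ≤ 1 → 0 ≤ 2 * t * S + t ^ 2 * D := by
    intro t ht ht1
    have hnn : ∀ ℓ, 0 ≤ θstar ℓ ^ 2 + t * d ℓ := by
      intro ℓ
      have h1 : (0:ℝ) ≤ θ ℓ ^ 2 / B ^ 2 := by positivity
      have h2 := sq_nonneg (θstar ℓ)
      have hdl : d ℓ = θ ℓ ^ 2 / B ^ 2 - θstar ℓ ^ 2 := rfl
      rw [hdl]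
      nlinarith [mul_nonneg ht.le h1, mul_nonneg (sub_nonneg.mpr ht1) h2]
    set θt : I → ℝ := fun ℓ => Real.sqrt (θstar ℓ ^ 2 + t * d ℓ) with hθt
    have hsq : ∀ ℓ, θt ℓ ^ 2 = θstar ℓ ^ 2 + t * d ℓ := fun ℓ => Real.sq_sqrt (hnn ℓ)
    have hmemt : θt ∈ {θ : I → ℝ | (∑ ℓ, (θ ℓ) ^ 2 * (c ℓ) ^ 2 ≤ 1) ∧ r ^ 2 ≤ ∑ ℓ, (θ ℓ) ^ 2} := by
      constructor
      · have e1 : ∑ ℓ, θt ℓ ^ 2 * c ℓ ^ 2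
            = (1 - t) * (∑ ℓ, θstar ℓ ^ 2 * c ℓ ^ 2) + t * (∑ ℓ, x ℓ * c ℓ ^ 2) := by
          rw [Finset.mul_sum, Finset.mul_sum, ← Finset.sum_add_distrib]
          exact Finset.sum_congr rfl fun ℓ _ => by rw [hsq, hd]; ring
        rw [e1]
        nlinarith
      · have e2 : ∑ ℓ, θt ℓ ^ 2
            = (1 - t) * (∑ ℓ, θstar ℓ ^ 2) + t * (∑ ℓ, x ℓ) := by
          rw [Finset.mul_sum, Finset.mul_sum, ← Finset.sum_add_distrib]
          exact Finset.sum_congr rfl fun ℓ _ => by rw [hsq, hd]; ring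
        rw [e2]
        nlinarith
    have hmint := hmin θt hmemt
    have e4 : ∑ ℓ, θt ℓ ^ 4
        = (∑ ℓ, θstar ℓ ^ 4) + 2 * t * S + t ^ 2 * D := by
      have e : ∑ ℓ, θt ℓ ^ 4
          = ∑ ℓ, (θstar ℓ ^ 4 + 2 * t * (θstar ℓ ^ 2 * d ℓ) + t ^ 2 * d ℓ ^ 2) := by
        apply Finset.sum_congr rfl
        intro ℓ _
        have h4 : θt ℓ ^ 4 = (θt ℓ ^ 2) ^ 2 := by ring
        rw [h4, hsq]
        ring
      rw [e, Finset.sum_add_distrib, Finset.sum_add_distrib, ← Finset.mul_sum, ← Finset.mul_sum,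
        hS, hD]
    rw [e4] at hmint
    linarith
  -- deduce S ≥ 0
  have hSnn : 0 ≤ S := by
    by_contra h
    push_neg at h
    have hnS : 0 < -S := by linarith
    have htpos : 0 < -S / (D + 1) := by positivity
    set t : ℝ := min 1 (-S / (D + 1)) with htdef
    have ht0 : 0 < t := lt_min one_pos htpos
    have ht1 : t ≤ 1 := min_le_left _ _
    have ht2 : t ≤ -S / (D + 1) := min_le_right _ _
    have hk := key t ht0 ht1
    have h3 : (-S / (D + 1)) * D ≤ -S := by
      rw [div_mul_eq_mul_div, div_le_iff₀ (by linarith)]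
      nlinarith
    have h4 : t * D ≤ -S := le_trans (mul_le_mul_of_nonneg_right ht2 hDnn) h3
    have h5 : 2 * S + t * D < 0 := by linarith
    nlinarith
  -- translate S ≥ 0 into the key inequality
  have hSsplit : S = (∑ ℓ, θstar ℓ ^ 2 * x ℓ) - ∑ ℓ, θstar ℓ ^ 4 := by
    rw [hS, ← Finset.sum_sub_distrib]
    exact Finset.sum_congr rfl fun ℓ _ => by rw [hd]; ring
  have hQ : B ^ 2 * ∑ ℓ, θstar ℓ ^ 4 ≤ ∑ ℓ, θstar ℓ ^ 2 * θ ℓ ^ 2 := by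
    have e : ∑ ℓ, θstar ℓ ^ 2 * θ ℓ ^ 2 = B ^ 2 * ∑ ℓ, θstar ℓ ^ 2 * x ℓ := by
      rw [Finset.mul_sum]
      apply Finset.sum_congr rfl
      intro ℓ _
      have hxl : x ℓ = θ ℓ ^ 2 / B ^ 2 := rfl
      rw [hxl]
      field_simp
    rw [e]
    have : (∑ ℓ, θstar ℓ ^ 4) ≤ ∑ ℓ, θstar ℓ ^ 2 * x ℓ := by
      rw [hSsplit] at hSnn; linarith
    nlinarith
  -- final computation
  have hsum : ∑ ℓ, ω ℓ * θ ℓ ^ 2 = (∑ ℓ, θstar ℓ ^ 2 * θ ℓ ^ 2) / (2 * ε ^ 2 * a) := by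
    rw [Finset.sum_div]
    exact Finset.sum_congr rfl fun ℓ _ => by rw [hω]; ring
  rw [hsum]
  have e : (1 / ε ^ 2) * ((∑ ℓ, θstar ℓ ^ 2 * θ ℓ ^ 2) / (2 * ε ^ 2 * a))
      = (∑ ℓ, θstar ℓ ^ 2 * θ ℓ ^ 2) / (2 * ε ^ 4 * a) := by
    rw [one_div, inv_mul_eq_div, div_div]
    ring
  rw [e, le_div_iff₀ (by positivity)]
  have hA : 2 * ε ^ 4 * a ^ 2 = ∑ ℓ, θstar ℓ ^ 4 := by
    field_simp at ha2
    linarith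
  nlinarith [hQ, hA, sq_nonneg a]
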